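/- Let B be a nonempty finite index set, let N > 0 be a real number, and for each i ∈ B let a_i > 0 and b_i > 0 be reals with a_i + b_i = N and ∑_{i∈B} a_i > N. Define F : (0,1)^B → ℝ by F(ξ) = ∑_{i∈B} [ a_i log(1 - ξ_i) + b_i log(ξ_i) ] − N log(1 − ∏_{j∈B} ξ_j). Then F has exactly one stationary point in (0,1)^B, namely the point ξ with ξ_i = (1 − r_i) + r_i π* for every i ∈ B, where r_i = a_i/N and π* is the unique solution in (0,1) of π = ∏_{j∈B} ((1 − r_j) + r_j π). -/

import Mathlib

/-!
Write `r i = a i / N` and `g π = ∏ j, (1 - r j + r j π)`. Setting the partial derivative of `F`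
in `ξ i` to zero gives `ξ i = 1 - r i + r i P` with `P = ∏ j, ξ j`; multiplying these equations
shows that `P` is a fixed point of `g`, and conversely a fixed point `π` of `g` defines a stationary
point. Since `g 0 > 0` and `g'(1) = ∑ r j > 1`, `g` crosses the diagonal in `(0, 1)`. The crossing
is unique: for at least two factors in `(0, 1)`, moving every factor the same fraction `t` towards
`1` moves the product strictly less than that fraction,
`∏ ((1 - t) x j + t) < (1 - t) ∏ x j + t`, so `g q < q` to the right of any fixed point.
-/

noncomputable def siblingLogLik {ι : Type*} (B : Finset ι) (N : ℝ) (a b : ι → ℝ)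
    (ξ : ι → ℝ) : ℝ :=
  ∑ i ∈ B, (a i * Real.log (1 - ξ i) + b i * Real.log (ξ i)) -
    N * Real.log (1 - ∏ j ∈ B, ξ j)

open Finset

section FixedPoint

variable {ι : Type*}

theorem interp_one_mul_interp_one (x y t : ℝ) :
    ((1 - t) * x + t) * ((1 - t) * y + t) =
      (1 - t) * (x * y) + t - t * (1 - t) * ((1 - x) * (1 - y)) := by
  ring

theorem prod_interp_one_le (s : Finset ι) {x : ι → ℝ} {t : ℝ} (ht : t ∈ Set.Icc (0 : ℝ) 1)
    (hx : ∀ j ∈ s, x j ∈ Set.Icc (0 : ℝ) 1) :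
    ∏ j ∈ s, ((1 - t) * x j + t) ≤ (1 - t) * ∏ j ∈ s, x j + t := by
  classical
  obtain ⟨ht0, ht1⟩ := ht
  induction s using Finset.induction_on with
  | empty => simp
  | insert c s hcs ih =>
    obtain ⟨hxc0, hxc1⟩ := hx c (mem_insert_self c s)
    have hxs : ∀ j ∈ s, x j ∈ Set.Icc (0 : ℝ) 1 := fun j hj => hx j (mem_insert_of_mem hj)
    have hP1 : ∏ j ∈ s, x j ≤ 1 := prod_le_one (fun j hj => (hxs j hj).1) (fun j hj => (hxs j hj).2)
    rw [prod_insert hcs, prod_insert hcs]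
    calc ((1 - t) * x c + t) * ∏ j ∈ s, ((1 - t) * x j + t)
        ≤ ((1 - t) * x c + t) * ((1 - t) * ∏ j ∈ s, x j + t) :=
          mul_le_mul_of_nonneg_left (ih hxs) (by nlinarith)
      _ ≤ (1 - t) * (x c * ∏ j ∈ s, x j) + t := by
          rw [interp_one_mul_interp_one]
          have : 0 ≤ t * (1 - t) * ((1 - x c) * (1 - ∏ j ∈ s, x j)) := by
            apply mul_nonneg (mul_nonneg ht0 (by linarith)) (mul_nonneg (by linarith) (by linarith))
          linarith

theorem prod_lt_one_of_mem_Ioo {s : Finset ι} (hs : s.Nonempty) {x : ι → ℝ}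
    (hx : ∀ j ∈ s, x j ∈ Set.Ioo (0 : ℝ) 1) : ∏ j ∈ s, x j < 1 := by
  simpa using prod_lt_prod_of_nonempty (fun j hj => (hx j hj).1) (fun j hj => (hx j hj).2) hs

theorem prod_interp_one_lt {s : Finset ι} (hs : 1 < s.card) {x : ι → ℝ} {t : ℝ}
    (ht : t ∈ Set.Ioo (0 : ℝ) 1) (hx : ∀ j ∈ s, x j ∈ Set.Ioo (0 : ℝ) 1) :
    ∏ j ∈ s, ((1 - t) * x j + t) < (1 - t) * ∏ j ∈ s, x j + t := by
  classical
  obtain ⟨ht0, ht1⟩ := ht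
  obtain ⟨c, hc⟩ := card_pos.mp (by omega : 0 < s.card)
  have hrest : (s.erase c).Nonempty := by
    rw [← card_pos, card_erase_of_mem hc]; omega
  have hxr : ∀ j ∈ s.erase c, x j ∈ Set.Ioo (0 : ℝ) 1 := fun j hj => hx j (mem_of_mem_erase hj)
  obtain ⟨hxc0, hxc1⟩ := hx c hc
  have hP0 : 0 ≤ ∏ j ∈ s.erase c, x j := prod_nonneg fun j hj => (hxr j hj).1.le
  have hP1 : ∏ j ∈ s.erase c, x j < 1 := prod_lt_one_of_mem_Ioo hrest hxr
  rw [← mul_prod_erase s _ hc, ← mul_prod_erase s _ hc]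
  calc ((1 - t) * x c + t) * ∏ j ∈ s.erase c, ((1 - t) * x j + t)
      ≤ ((1 - t) * x c + t) * ((1 - t) * ∏ j ∈ s.erase c, x j + t) :=
        mul_le_mul_of_nonneg_left
          (prod_interp_one_le _ ⟨ht0.le, ht1.le⟩ fun j hj => Set.Ioo_subset_Icc_self (hxr j hj))
          (by nlinarith)
    _ < (1 - t) * (x c * ∏ j ∈ s.erase c, x j) + t := by
        rw [interp_one_mul_interp_one]
        have : 0 < t * (1 - t) * ((1 - x c) * (1 - ∏ j ∈ s.erase c, x j)) := by
          apply mul_pos (mul_pos ht0 (by linarith)) (mul_pos (by linarith) (by linarith))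
        linarith

theorem one_sub_add_mul_mem_Ioo {r p : ℝ} (hr : r ∈ Set.Ioo (0 : ℝ) 1)
    (hp : p ∈ Set.Ioo (0 : ℝ) 1) : (1 - r) + r * p ∈ Set.Ioo (0 : ℝ) 1 := by
  obtain ⟨hr0, hr1⟩ := hr
  obtain ⟨hp0, hp1⟩ := hp
  constructor <;> nlinarith

theorem one_lt_card_of_one_lt_sum {s : Finset ι} {r : ι → ℝ} (hr : ∀ j ∈ s, r j ≤ 1)
    (hS : 1 < ∑ j ∈ s, r j) : 1 < s.card := by
  by_contra! hcard
  have hsum : ∑ j ∈ s, r j ≤ s.card • (1 : ℝ) := sum_le_card_nsmul s r 1 hr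
  have hcard' : (s.card : ℝ) ≤ 1 := by exact_mod_cast hcard
  rw [nsmul_eq_mul, mul_one] at hsum
  linarith

variable {s : Finset ι} {r : ι → ℝ}

theorem exists_prod_affine_lt_self (hr : ∀ j ∈ s, r j ∈ Set.Ioo (0 : ℝ) 1)
    (hS : 1 < ∑ j ∈ s, r j) : ∃ p ∈ Set.Ioo (0 : ℝ) 1, ∏ j ∈ s, ((1 - r j) + r j * p) < p := by
  set S := ∑ j ∈ s, r j
  -- at `p = 1 - u` the product is at most `exp (-u S) ≤ 1 / (1 + u S)`, below `1 - u` for this `u`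
  set u := (S - 1) / (2 * S)
  have hS0 : 0 < S := by linarith
  have hu : u * (2 * S) = S - 1 := div_mul_cancel₀ _ (by positivity)
  have hu0 : 0 < u := div_pos (by linarith) (by positivity)
  have hu1 : u < 1 := by rw [div_lt_one (by positivity)]; linarith
  refine ⟨1 - u, ⟨by linarith, by linarith⟩, ?_⟩
  calc ∏ j ∈ s, ((1 - r j) + r j * (1 - u))
      = ∏ j ∈ s, (1 - r j * u) := prod_congr rfl fun j _ => by ring
    _ ≤ ∏ j ∈ s, Real.exp (-(r j * u)) :=
        prod_le_prod (fun j hj => by nlinarith [(hr j hj).1, (hr j hj).2])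
          fun j _ => Real.one_sub_le_exp_neg _
    _ = (Real.exp (u * S))⁻¹ := by
        rw [← Real.exp_sum, sum_neg_distrib, ← sum_mul, mul_comm, Real.exp_neg]
    _ ≤ (1 + u * S)⁻¹ := inv_anti₀ (by positivity) (by linarith [Real.add_one_le_exp (u * S)])
    _ < 1 - u := by
        rw [inv_lt_iff_one_lt_mul₀ (by positivity)]
        nlinarith

theorem exists_fixedPoint_mem_Ioo (hr : ∀ j ∈ s, r j ∈ Set.Ioo (0 : ℝ) 1)
    (hS : 1 < ∑ j ∈ s, r j) : ∃ p ∈ Set.Ioo (0 : ℝ) 1, p = ∏ j ∈ s, ((1 - r j) + r j * p) := by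
  obtain ⟨q, hq, hq_lt⟩ := exists_prod_affine_lt_self hr hS
  have hcont : Continuous fun y : ℝ => ∏ j ∈ s, ((1 - r j) + r j * y) - y := by fun_prop
  have h0 : 0 < ∏ j ∈ s, ((1 - r j) + r j * 0) - 0 := by
    simpa using prod_pos fun j hj => sub_pos.2 (hr j hj).2
  obtain ⟨p, hp, hp0⟩ := intermediate_value_Ioo' hq.1.le hcont.continuousOn ⟨sub_neg.2 hq_lt, h0⟩
  exact ⟨p, ⟨hp.1, hp.2.trans hq.2⟩, (sub_eq_zero.1 hp0).symm⟩

theorem prod_affine_lt_self_of_fixedPoint_lt (hs : 1 < s.card)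
    (hr : ∀ j ∈ s, r j ∈ Set.Ioo (0 : ℝ) 1) {p q : ℝ} (hp : p ∈ Set.Ioo (0 : ℝ) 1)
    (hfix : p = ∏ j ∈ s, ((1 - r j) + r j * p)) (hpq : p < q) (hq : q < 1) :
    ∏ j ∈ s, ((1 - r j) + r j * q) < q := by
  -- `q` lies the fraction `t` of the way from `p` to `1`, and so does each factor at `q` from its
  -- value at `p`
  set t := (q - p) / (1 - p)
  have h1p : 0 < 1 - p := by linarith [hp.2]
  have ht : t ∈ Set.Ioo (0 : ℝ) 1 := ⟨div_pos (by linarith) h1p, (div_lt_one h1p).2 (by linarith)⟩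
  have hq_eq : q = (1 - t) * p + t := by
    have : t * (1 - p) = q - p := div_mul_cancel₀ _ h1p.ne'
    linarith
  calc ∏ j ∈ s, ((1 - r j) + r j * q)
      = ∏ j ∈ s, ((1 - t) * ((1 - r j) + r j * p) + t) :=
        prod_congr rfl fun j _ => by rw [hq_eq]; ring
    _ < (1 - t) * ∏ j ∈ s, ((1 - r j) + r j * p) + t :=
        prod_interp_one_lt hs ht fun j hj => one_sub_add_mul_mem_Ioo (hr j hj) hp
    _ = q := by rw [← hfix, hq_eq]

theorem fixedPoint_unique (hs : 1 < s.card) (hr : ∀ j ∈ s, r j ∈ Set.Ioo (0 : ℝ) 1) {p q : ℝ}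
    (hp : p ∈ Set.Ioo (0 : ℝ) 1) (hq : q ∈ Set.Ioo (0 : ℝ) 1)
    (hfp : p = ∏ j ∈ s, ((1 - r j) + r j * p)) (hfq : q = ∏ j ∈ s, ((1 - r j) + r j * q)) :
    p = q := by
  by_contra hne
  rcases lt_or_gt_of_ne hne with h | h
  · linarith [prod_affine_lt_self_of_fixedPoint_lt hs hr hp hfp h hq.2]
  · linarith [prod_affine_lt_self_of_fixedPoint_lt hs hr hq hfq h hp.2]

theorem forall_eq_affine_prod_iff (hs : 1 < s.card) (hr : ∀ j ∈ s, r j ∈ Set.Ioo (0 : ℝ) 1)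
    {π : ℝ} (hπ : π ∈ Set.Ioo (0 : ℝ) 1) (hfix : π = ∏ j ∈ s, ((1 - r j) + r j * π))
    {x : ι → ℝ} (hx : ∀ j ∈ s, x j ∈ Set.Ioo (0 : ℝ) 1) :
    (∀ i ∈ s, x i = (1 - r i) + r i * ∏ j ∈ s, x j) ↔ ∀ i ∈ s, x i = (1 - r i) + r i * π := by
  constructor
  · intro h
    have hP : ∏ j ∈ s, x j ∈ Set.Ioo (0 : ℝ) 1 :=
      ⟨prod_pos fun j hj => (hx j hj).1, prod_lt_one_of_mem_Ioo (card_pos.1 (by omega)) hx⟩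
    have hPπ : ∏ j ∈ s, x j = π := fixedPoint_unique hs hr hP hπ (prod_congr rfl h) hfix
    exact fun i hi => hPπ ▸ h i hi
  · intro h
    have hPπ : ∏ j ∈ s, x j = π := by rw [prod_congr rfl h, ← hfix]
    exact fun i hi => hPπ.symm ▸ h i hi

end FixedPoint

theorem partialDeriv_eq_zero_iff {a b N x Q : ℝ} (hab : a + b = N) (hN : N ≠ 0)
    (hx : x ∈ Set.Ioo (0 : ℝ) 1) (hxQ : x * Q < 1) :
    a * (-1 / (1 - x)) + b * x⁻¹ - N * (-Q / (1 - x * Q)) = 0 ↔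
      x = (1 - a / N) + a / N * (x * Q) := by
  obtain ⟨hx0, hx1⟩ := hx
  have hden : 0 < x * (1 - x) * (1 - x * Q) := mul_pos (mul_pos hx0 (by linarith)) (by linarith)
  have hclear :
      (a * (-1 / (1 - x)) + b * x⁻¹ - N * (-Q / (1 - x * Q))) * (x * (1 - x) * (1 - x * Q)) =
        N * (1 - x) - a * (1 - x * Q) := by
    have h1x : 1 - x ≠ 0 := by linarith
    have h1xQ : 1 - x * Q ≠ 0 := by linarith
    field_simp
    rw [← hab]; ring
  rw [← mul_left_inj' hden.ne', hclear, zero_mul]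
  constructor <;> intro h
  · field_simp; linarith
  · field_simp at h; linarith

section Stationarity

variable {ι : Type*} [DecidableEq ι] {B : Finset ι} {N : ℝ} {a b ξ : ι → ℝ} {i : ι}

theorem siblingLogLik_update (hi : i ∈ B) (t : ℝ) :
    siblingLogLik B N a b (Function.update ξ i t) =
      a i * Real.log (1 - t) + b i * Real.log t - N * Real.log (1 - t * ∏ j ∈ B.erase i, ξ j) +
        ∑ j ∈ B.erase i, (a j * Real.log (1 - ξ j) + b j * Real.log (ξ j)) := by
  rw [siblingLogLik, prod_update_of_mem hi, ← erase_eq, ← add_sum_erase _ _ hi,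
    Function.update_self]
  have hrest : ∀ j ∈ B.erase i, a j * Real.log (1 - Function.update ξ i t j) +
      b j * Real.log (Function.update ξ i t j) = a j * Real.log (1 - ξ j) + b j * Real.log (ξ j) :=
    fun j hj => by rw [Function.update_of_ne (ne_of_mem_erase hj)]
  rw [sum_congr rfl hrest]
  ring

theorem hasDerivAt_siblingLogLik_update (hi : i ∈ B) (hx0 : ξ i ≠ 0) (hx1 : 1 - ξ i ≠ 0)
    (hxQ : 1 - ξ i * ∏ j ∈ B.erase i, ξ j ≠ 0) :
    HasDerivAt (fun t => siblingLogLik B N a b (Function.update ξ i t))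
      (a i * (-1 / (1 - ξ i)) + b i * (ξ i)⁻¹ -
        N * (-(∏ j ∈ B.erase i, ξ j) / (1 - ξ i * ∏ j ∈ B.erase i, ξ j))) (ξ i) := by
  simp_rw [siblingLogLik_update hi]
  have hlog1 := ((hasDerivAt_id (ξ i)).const_sub 1).log hx1
  have hlog := Real.hasDerivAt_log hx0
  have hlog2 := (((hasDerivAt_id (ξ i)).mul_const (∏ j ∈ B.erase i, ξ j)).const_sub 1).log hxQ
  simp only [id, one_mul] at hlog1 hlog2
  exact (((hlog1.const_mul (a i)).add (hlog.const_mul (b i))).sub (hlog2.const_mul N)).add_const _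

theorem hasDerivAt_siblingLogLik_update_zero_iff (hab : a i + b i = N) (hN : N ≠ 0)
    (hi : i ∈ B) (hξ : ∀ j ∈ B, ξ j ∈ Set.Ioo (0 : ℝ) 1) :
    HasDerivAt (fun t => siblingLogLik B N a b (Function.update ξ i t)) 0 (ξ i) ↔
      ξ i = (1 - a i / N) + a i / N * ∏ j ∈ B, ξ j := by
  have hx := hξ i hi
  have hQ : ∏ j ∈ B.erase i, ξ j ≤ 1 :=
    prod_le_one (fun j hj => (hξ j (mem_of_mem_erase hj)).1.le)
      fun j hj => (hξ j (mem_of_mem_erase hj)).2.le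
  have hxQ : ξ i * ∏ j ∈ B.erase i, ξ j < 1 := by nlinarith [hx.1, hx.2]
  have hderiv := hasDerivAt_siblingLogLik_update (N := N) (a := a) (b := b) hi hx.1.ne'
    (sub_ne_zero.2 hx.2.ne') (sub_ne_zero.2 hxQ.ne')
  rw [← mul_prod_erase B ξ hi, ← partialDeriv_eq_zero_iff hab hN hx hxQ]
  exact ⟨fun h => h.unique hderiv |>.symm, fun h => h ▸ hderiv⟩

end Stationarity

theorem unique_stationary_point_of_siblingLogLik_general {ι : Type*} [DecidableEq ι]
    (B : Finset ι) (N : ℝ) (hN : 0 < N) (a b : ι → ℝ)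
    (ha : ∀ i ∈ B, 0 < a i) (hb : ∀ i ∈ B, 0 < b i)
    (hab : ∀ i ∈ B, a i + b i = N)
    (hsum : N < ∑ i ∈ B, a i) :
    ∃ π ∈ Set.Ioo (0 : ℝ) 1,
      π = ∏ j ∈ B, ((1 - a j / N) + (a j / N) * π) ∧
      (∀ π' ∈ Set.Ioo (0 : ℝ) 1,
        π' = ∏ j ∈ B, ((1 - a j / N) + (a j / N) * π') → π' = π) ∧
      ∀ ξ : ι → ℝ, (∀ i ∈ B, ξ i ∈ Set.Ioo (0 : ℝ) 1) →
        ((∀ i ∈ B, HasDerivAt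
            (fun t : ℝ => siblingLogLik B N a b (Function.update ξ i t)) 0 (ξ i)) ↔
          (∀ i ∈ B, ξ i = (1 - a i / N) + (a i / N) * π)) := by
  have hr : ∀ j ∈ B, a j / N ∈ Set.Ioo (0 : ℝ) 1 := fun j hj =>
    ⟨div_pos (ha j hj) hN, (div_lt_one hN).2 (by linarith [hb j hj, hab j hj])⟩
  have hS : 1 < ∑ j ∈ B, a j / N := by rwa [← sum_div, one_lt_div hN]
  have hcard : 1 < B.card := one_lt_card_of_one_lt_sum (fun j hj => (hr j hj).2.le) hS
  obtain ⟨π, hπ, hfix⟩ := exists_fixedPoint_mem_Ioo hr hS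
  refine ⟨π, hπ, hfix, fun π' hπ' hfix' => fixedPoint_unique hcard hr hπ' hπ hfix' hfix,
    fun ξ hξ => ?_⟩
  rw [← forall_eq_affine_prod_iff hcard hr hπ hfix hξ]
  exact forall₂_congr fun i hi =>
    hasDerivAt_siblingLogLik_update_zero_iff (hab i hi) hN.ne' hi hξ

/-- Under the regularity conditions `a i > 0`, `b i > 0`, `a i + b i = N` and
`∑ i ∈ B, a i > N`, the sibling-group log-likelihood `F` has exactly one stationary
point in `(0,1)^B`, namely `ξ i = (1 - r i) + r i * π*` where `r i = a i / N` and
`π*` is the unique solution in `(0,1)` of `π = ∏ j ∈ B, ((1 - r j) + r j * π)`. -/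
theorem unique_stationary_point_of_siblingLogLik {ι : Type*} [DecidableEq ι]
    (B : Finset ι) (hB : B.Nonempty) (N : ℝ) (hN : 0 < N) (a b : ι → ℝ)
    (ha : ∀ i ∈ B, 0 < a i) (hb : ∀ i ∈ B, 0 < b i)
    (hab : ∀ i ∈ B, a i + b i = N)
    (hsum : N < ∑ i ∈ B, a i) :
    ∃ π ∈ Set.Ioo (0 : ℝ) 1,
      π = ∏ j ∈ B, ((1 - a j / N) + (a j / N) * π) ∧
      (∀ π' ∈ Set.Ioo (0 : ℝ) 1,
        π' = ∏ j ∈ B, ((1 - a j / N) + (a j / N) * π') → π' = π) ∧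
      ∀ ξ : ι → ℝ, (∀ i ∈ B, ξ i ∈ Set.Ioo (0 : ℝ) 1) →
        ((∀ i ∈ B, HasDerivAt
            (fun t : ℝ => siblingLogLik B N a b (Function.update ξ i t)) 0 (ξ i)) ↔
          (∀ i ∈ B, ξ i = (1 - a i / N) + (a i / N) * π)) :=
  unique_stationary_point_of_siblingLogLik_general B N hN a b ha hb hab hsum
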